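/- Let c ⊂ ℙ² ⊂ ℙ⁴ be a smooth conic with plane ⟨c⟩ = {x₃ = x₄ = 0}, contained in the quartic surface S = Q₀ ∩ Q' where Q₀ = x₃ℓ₃ + x₄ℓ₄ + q(x₀,x₁,x₂) and Q' = x₃m₃ + x₄m₄ (so q is an equation of c in ⟨c⟩). Then the assignment x₃ ↦ m₄|_c, x₄ ↦ −m₃|_c, q ↦ (m₃ℓ₄ − m₄ℓ₃)|_c defines a well-defined global section θ ∈ Hom_{O_S}(I_{c/S}, O_c) = H⁰(N_{c/S}), and θ = 0 if and only if m₃ and m₄ both vanish identically on c (equivalently, m₃, m₄ ∈ ⟨x₃, x₄⟩, i.e., Q' has rank ≤ 2). -/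

import Mathlib

/-!
Write `J = (x₃, x₄, q)` for the ideal of `c` and `I = (Q₀, Q') ⊆ J` for that of `S`. The sequence
`x₃, x₄, q` is regular: `(x₃)` and `(x₃, x₄)` are prime, and `q ∉ (x₃, x₄)` because `q` involves
only `x₀, x₁, x₂` and is nonzero (`q = 0` would make `Mq` skew-symmetric, hence singular in odd
size). So every syzygy `a x₃ + b x₄ + c q = 0` is a combination of Koszul syzygies, and each of
those sends `(m₄, -m₃, m₃ℓ₄ - m₄ℓ₃)` into `J`. Hence
`a x₃ + b x₄ + c q ↦ a m₄ - b m₃ + c (m₃ℓ₄ - m₄ℓ₃)`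
is a well-defined map `J → R/J`; it kills `Q₀` and `Q'`, so it descends to `θ : J/I → R/J`.
Finally `θ = 0` iff its values on the generators lie in `J`, and a linear form lies in `J` iff its
`x₀, x₁, x₂` coefficients vanish, since `q` has no terms of degree `1`.
-/

open MvPolynomial

namespace Stmt15

/-- The homogeneous coordinate ring of `ℙ⁴`. -/
abbrev R := MvPolynomial (Fin 5) ℂ

/-- The linear form with coefficient vector `μ`. -/
noncomputable def lin (μ : Fin 5 → ℂ) : R := ∑ i, C (μ i) * X i

/-- The quadric `q(x₀,x₁,x₂)` with symmetric coefficient matrix `Mq`. -/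
noncomputable def qconic (Mq : Matrix (Fin 3) (Fin 3) ℂ) : R :=
  ∑ i, ∑ j, C (Mq i j) * X (Fin.castLE (by norm_num) i) * X (Fin.castLE (by norm_num) j)

end Stmt15

namespace Submodule

variable {A N M : Type*} [Ring A] [AddCommGroup N] [Module A N] [AddCommGroup M] [Module A M]

theorem exists_linearMap_of_span_eq_range {ι : Type*} [Fintype ι] {J : Submodule A N}
    {g : ι → N} (hJ : J = span A (Set.range g)) (n : ι → M)
    (hsyz : ∀ a : ι → A, ∑ i, a i • g i = 0 → ∑ i, a i • n i = 0) :
    ∃ θ : J →ₗ[A] M, ∀ i (hi : g i ∈ J), θ ⟨g i, hi⟩ = n i := by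
  classical
  set π := Fintype.linearCombination A g
  have hker : LinearMap.ker π ≤ LinearMap.ker (Fintype.linearCombination A n) := hsyz
  refine ⟨(LinearMap.ker π).liftQ _ hker ∘ₗ π.quotKerEquivRange.symm.toLinearMap ∘ₗ
    (LinearEquiv.ofEq _ _ (hJ.trans (Fintype.range_linearCombination A g).symm)).toLinearMap,
    fun i hi => ?_⟩
  have hgi : π (Pi.single i 1) = g i := by simp [π]
  have hpre : π.quotKerEquivRange.symm ⟨g i, hgi ▸ ⟨_, rfl⟩⟩ =
      (LinearMap.ker π).mkQ (Pi.single i 1) := by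
    simpa only [hgi] using π.quotKerEquivRange_symm_apply_image (Pi.single i 1) ⟨_, rfl⟩
  calc _ = (LinearMap.ker π).liftQ _ hker ((LinearMap.ker π).mkQ (Pi.single i 1)) :=
        congrArg _ hpre
    _ = n i := by simp

theorem linearMap_span_triple_eq_zero_iff {a b c : N} (θ : span A {a, b, c} →ₗ[A] M) :
    θ = 0 ↔ θ ⟨a, subset_span (by simp)⟩ = 0 ∧ θ ⟨b, subset_span (by simp)⟩ = 0 ∧
      θ ⟨c, subset_span (by simp)⟩ = 0 := by
  refine ⟨by rintro rfl; simp, fun ⟨ha, hb, hc⟩ => LinearMap.ext_on span_span_coe_preimage ?_⟩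
  rintro ⟨v, hv⟩ hmem
  simp only [Set.mem_preimage, Set.mem_insert_iff, Set.mem_singleton_iff] at hmem
  rcases hmem with rfl | rfl | rfl <;> assumption

end Submodule

namespace Ideal

variable {A : Type*} [CommRing A] {I : Ideal A} {x y z n₁ n₂ n₃ : A}

theorem exists_eq_mul_of_mul_add_mul_eq_zero (hx : x ∈ nonZeroDivisors A)
    (hy : ∀ c, c * y ∈ span {x} → c ∈ span {x}) {a b : A} (h : a * x + b * y = 0) :
    ∃ d, a = d * y ∧ b = -(d * x) := by
  obtain ⟨e, rfl⟩ := mem_span_singleton'.mp <|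
    hy b (mem_span_singleton'.mpr ⟨-a, by linear_combination -h⟩)
  refine ⟨-e, (mul_cancel_right_mem_nonZeroDivisors hx).mp ?_, by ring⟩
  linear_combination h

theorem mul_add_mul_add_mul_mem_span_of_eq_zero (hx : x ∈ nonZeroDivisors A)
    (hy : ∀ c, c * y ∈ span {x} → c ∈ span {x})
    (hz : ∀ c, c * z ∈ span {x, y} → c ∈ span {x, y})
    {a b c : A} (h : a * x + b * y + c * z = 0) (n₁ n₂ n₃ : A) :
    a * n₁ + b * n₂ + c * n₃ ∈ span {x, y, z} := by
  obtain ⟨c₁, c₂, hc⟩ := mem_span_pair.mp <|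
    hz c (mem_span_pair.mpr ⟨-a, -b, by linear_combination -h⟩)
  obtain ⟨d, hd₁, hd₂⟩ := exists_eq_mul_of_mul_add_mul_eq_zero hx hy
    (a := a + c₁ * z) (b := b + c₂ * z) (by linear_combination h + z * hc)
  have hkoszul : a * n₁ + b * n₂ + c * n₃ =
      (c₁ * n₃ - d * n₂) * x + (d * n₁ + c₂ * n₃) * y + (-(c₁ * n₁) - c₂ * n₂) * z := by
    linear_combination n₁ * hd₁ + n₂ * hd₂ - n₃ * hc
  rw [hkoszul]
  refine add_mem (add_mem ?_ ?_) ?_ <;> exact mul_mem_left _ _ (subset_span (by simp))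

theorem map_span_triple {B : Type*} [CommRing B] (f : A →+* B) (x y z : A) :
    map f (span {x, y, z}) = span {f x, f y, f z} := by
  simp [map_span, Set.image_insert_eq]

theorem Quotient.smul_mk (J : Ideal A) (r s : A) : r • Quotient.mk J s = Quotient.mk J (r * s) :=
  rfl

theorem Quotient.mk_mk_eq_zero_iff (hI : I ≤ span {x, y, z}) (n : A) :
    letI mk := Quotient.mk I
    Quotient.mk (span {mk x, mk y, mk z}) (mk n) = 0 ↔ n ∈ span {x, y, z} := by
  rw [Quotient.eq_zero_iff_mem, ← map_span_triple, mem_quotient_iff_mem hI]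

theorem exists_linearMap_span_mk_triple
    (hI : ∀ a b c, a * x + b * y + c * z ∈ I → a * n₁ + b * n₂ + c * n₃ ∈ span {x, y, z}) :
    letI mk := Quotient.mk I
    letI J : Ideal (A ⧸ I) := span {mk x, mk y, mk z}
    ∃ θ : J →ₗ[A ⧸ I] (A ⧸ I) ⧸ J,
      θ ⟨mk x, subset_span (by simp)⟩ = Quotient.mk J (mk n₁) ∧
      θ ⟨mk y, subset_span (by simp)⟩ = Quotient.mk J (mk n₂) ∧
      θ ⟨mk z, subset_span (by simp)⟩ = Quotient.mk J (mk n₃) := by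
  have hJ : span {Quotient.mk I x, Quotient.mk I y, Quotient.mk I z} =
      Submodule.span (A ⧸ I) (Set.range ![Quotient.mk I x, Quotient.mk I y, Quotient.mk I z]) := by
    rw [Matrix.range_cons, Matrix.range_cons_cons_empty, Set.singleton_union]
  refine (Submodule.exists_linearMap_of_span_eq_range hJ
    ![Quotient.mk _ (Quotient.mk I n₁), Quotient.mk _ (Quotient.mk I n₂),
      Quotient.mk _ (Quotient.mk I n₃)] ?_).imp fun θ hθ => ⟨hθ 0 _, hθ 1 _, hθ 2 _⟩
  intro a ha
  choose a' ha' using fun i => Quotient.mk_surjective (a i)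
  have hmem : a' 0 * x + a' 1 * y + a' 2 * z ∈ I := by
    rw [← Quotient.eq_zero_iff_mem]
    simpa [Fin.sum_univ_three, ← ha'] using ha
  have hval : Quotient.mk I (a' 0 * n₁ + a' 1 * n₂ + a' 2 * n₃) ∈
      span {Quotient.mk I x, Quotient.mk I y, Quotient.mk I z} := by
    rw [← map_span_triple]
    exact mem_map_of_mem _ (hI _ _ _ hmem)
  rw [← Quotient.eq_zero_iff_mem] at hval
  simpa [Fin.sum_univ_three, ← ha', Quotient.smul_mk] using hval

theorem linearMap_span_mk_triple_eq_zero_iff (hI : I ≤ span {x, y, z}) :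
    letI mk := Quotient.mk I
    letI J : Ideal (A ⧸ I) := span {mk x, mk y, mk z}
    ∀ θ : J →ₗ[A ⧸ I] (A ⧸ I) ⧸ J,
      θ ⟨mk x, subset_span (by simp)⟩ = Quotient.mk J (mk n₁) →
      θ ⟨mk y, subset_span (by simp)⟩ = Quotient.mk J (mk n₂) →
      θ ⟨mk z, subset_span (by simp)⟩ = Quotient.mk J (mk n₃) →
      (θ = 0 ↔ n₁ ∈ span {x, y, z} ∧ n₂ ∈ span {x, y, z} ∧ n₃ ∈ span {x, y, z}) := by
  intro θ h₁ h₂ h₃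
  rw [Submodule.linearMap_span_triple_eq_zero_iff, h₁, h₂, h₃, Quotient.mk_mk_eq_zero_iff hI,
    Quotient.mk_mk_eq_zero_iff hI, Quotient.mk_mk_eq_zero_iff hI]

end Ideal

namespace MvPolynomial

variable {R σ τ : Type*} [CommRing R]

theorem ker_killCompl {f : σ → τ} (hf : Function.Injective f) :
    RingHom.ker (killCompl (R := R) hf) = Ideal.span (X '' (Set.range f)ᶜ) := by
  refine le_antisymm (fun p hp => ?_) (Ideal.span_le.mpr ?_)
  · have hsub : ∀ p : MvPolynomial τ R,
        p - rename f (killCompl hf p) ∈ Ideal.span (X '' (Set.range f)ᶜ) := by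
      intro p
      induction p using MvPolynomial.induction_on with
      | C a => simp
      | add p q hp hq => simpa only [map_add, add_sub_add_comm] using add_mem hp hq
      | mul_X p i hp =>
        by_cases hi : i ∈ Set.range f
        · obtain ⟨j, rfl⟩ := hi
          have hX : killCompl hf (X (f j)) = (X j : MvPolynomial σ R) := by
            simpa using killCompl_rename_app hf (X j)
          rw [map_mul, map_mul, hX, rename_X, ← sub_mul]
          exact Ideal.mul_mem_right _ _ hp
        · have hX : killCompl hf (X i) = (0 : MvPolynomial σ R) := by simp [killCompl, hi]
          rw [map_mul, hX, mul_zero, map_zero, sub_zero]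
          exact Ideal.mul_mem_left _ _ (Ideal.subset_span ⟨i, hi, rfl⟩)
    simpa [RingHom.mem_ker.mp hp] using hsub p
  · rintro _ ⟨i, hi, rfl⟩
    rw [SetLike.mem_coe, RingHom.mem_ker, killCompl, aeval_X, dif_neg hi]

theorem isPrime_span_X_image [IsDomain R] (s : Set σ) :
    (Ideal.span (X '' s : Set (MvPolynomial σ R))).IsPrime := by
  have hker := ker_killCompl (R := R) (Subtype.val_injective (p := (· ∈ sᶜ)))
  rw [Subtype.range_coe, compl_compl] at hker
  exact hker ▸ RingHom.ker_isPrime _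

theorem coeff_mul_eq_zero_of_isHomogeneous {p q : MvPolynomial σ R} {n : ℕ}
    (hq : q.IsHomogeneous n) {m : σ →₀ ℕ} (hm : m.degree < n) : coeff m (p * q) = 0 := by
  classical
  rw [coeff_mul]
  refine Finset.sum_eq_zero fun uv huv => ?_
  rw [Finset.HasAntidiagonal.mem_antidiagonal] at huv
  have hdeg : uv.2.degree < n := by
    have hsum := congrArg Finsupp.degree huv
    rw [map_add] at hsum
    omega
  rw [hq.coeff_eq_zero (by omega), mul_zero]

theorem coeff_single_eq_zero_of_mem_span {q f : MvPolynomial σ R} (hq : q.IsHomogeneous 2)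
    {i j k : σ} (hj : j ≠ i) (hk : k ≠ i) (hf : f ∈ Ideal.span {X j, X k, q}) :
    coeff (Finsupp.single i 1) f = 0 := by
  classical
  obtain ⟨a, f', hf', rfl⟩ := Ideal.mem_span_insert.mp hf
  obtain ⟨b, c, rfl⟩ := Ideal.mem_span_pair.mp hf'
  have hcq := coeff_mul_eq_zero_of_isHomogeneous (p := c) hq
    (m := Finsupp.single i 1) (by simp)
  rw [coeff_add, coeff_add, coeff_mul_X', coeff_mul_X', hcq]
  simp [hj, hk]

end MvPolynomial

namespace Stmt15

section Surface

variable {A : Type*} [CommRing A] {x y z : A}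

theorem span_quadrics_le_span (l₃ l₄ m₃ m₄ : A) :
    Ideal.span {x * l₃ + y * l₄ + z, x * m₃ + y * m₄} ≤ Ideal.span {x, y, z} := by
  rw [Ideal.span_le, Set.insert_subset_iff, Set.singleton_subset_iff]
  have hx : x ∈ Ideal.span {x, y, z} := Ideal.subset_span (by simp)
  have hy : y ∈ Ideal.span {x, y, z} := Ideal.subset_span (by simp)
  have hz : z ∈ Ideal.span {x, y, z} := Ideal.subset_span (by simp)
  exact ⟨add_mem (add_mem (Ideal.mul_mem_right _ _ hx) (Ideal.mul_mem_right _ _ hy)) hz,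
    add_mem (Ideal.mul_mem_right _ _ hx) (Ideal.mul_mem_right _ _ hy)⟩

theorem mem_span_of_mem_span_quadrics (hx : x ∈ nonZeroDivisors A)
    (hy : ∀ c, c * y ∈ Ideal.span {x} → c ∈ Ideal.span {x})
    (hz : ∀ c, c * z ∈ Ideal.span {x, y} → c ∈ Ideal.span {x, y}) {l₃ l₄ m₃ m₄ a b c : A}
    (h : a * x + b * y + c * z ∈ Ideal.span {x * l₃ + y * l₄ + z, x * m₃ + y * m₄}) :
    a * m₄ + b * -m₃ + c * (m₃ * l₄ - m₄ * l₃) ∈ Ideal.span {x, y, z} := by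
  obtain ⟨u, v, huv⟩ := Ideal.mem_span_pair.mp h
  have hsyz : (a - u * l₃ - v * m₃) * x + (b - u * l₄ - v * m₄) * y + (c - u) * z = 0 := by
    linear_combination -huv
  convert Ideal.mul_add_mul_add_mul_mem_span_of_eq_zero hx hy hz hsyz m₄ (-m₃)
    (m₃ * l₄ - m₄ * l₃) using 1
  ring

theorem exists_normalSection (hx : x ∈ nonZeroDivisors A)
    (hy : ∀ c, c * y ∈ Ideal.span {x} → c ∈ Ideal.span {x})
    (hz : ∀ c, c * z ∈ Ideal.span {x, y} → c ∈ Ideal.span {x, y}) (l₃ l₄ m₃ m₄ : A) :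
    letI I := Ideal.span {x * l₃ + y * l₄ + z, x * m₃ + y * m₄}
    letI mk := Ideal.Quotient.mk I
    letI J : Ideal (A ⧸ I) := Ideal.span {mk x, mk y, mk z}
    ∃ θ : J →ₗ[A ⧸ I] (A ⧸ I) ⧸ J,
      θ ⟨mk x, Ideal.subset_span (by simp)⟩ = Ideal.Quotient.mk J (mk m₄) ∧
      θ ⟨mk y, Ideal.subset_span (by simp)⟩ = Ideal.Quotient.mk J (mk (-m₃)) ∧
      θ ⟨mk z, Ideal.subset_span (by simp)⟩ = Ideal.Quotient.mk J (mk (m₃ * l₄ - m₄ * l₃)) :=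
  Ideal.exists_linearMap_span_mk_triple fun _ _ _ => mem_span_of_mem_span_quadrics hx hy hz

theorem normalSection_eq_zero_iff (l₃ l₄ m₃ m₄ : A) :
    letI I := Ideal.span {x * l₃ + y * l₄ + z, x * m₃ + y * m₄}
    letI mk := Ideal.Quotient.mk I
    letI J : Ideal (A ⧸ I) := Ideal.span {mk x, mk y, mk z}
    ∀ θ : J →ₗ[A ⧸ I] (A ⧸ I) ⧸ J,
      θ ⟨mk x, Ideal.subset_span (by simp)⟩ = Ideal.Quotient.mk J (mk m₄) →
      θ ⟨mk y, Ideal.subset_span (by simp)⟩ = Ideal.Quotient.mk J (mk (-m₃)) →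
      θ ⟨mk z, Ideal.subset_span (by simp)⟩ = Ideal.Quotient.mk J (mk (m₃ * l₄ - m₄ * l₃)) →
      (θ = 0 ↔ m₃ ∈ Ideal.span {x, y, z} ∧ m₄ ∈ Ideal.span {x, y, z}) := by
  intro θ h₁ h₂ h₃
  rw [Ideal.linearMap_span_mk_triple_eq_zero_iff (span_quadrics_le_span l₃ l₄ m₃ m₄) θ h₁ h₂ h₃,
    neg_mem_iff]
  exact ⟨fun ⟨h₄, h₃, _⟩ => ⟨h₃, h₄⟩, fun ⟨h₃, h₄⟩ =>
    ⟨h₄, h₃, sub_mem (Ideal.mul_mem_right _ _ h₃) (Ideal.mul_mem_right _ _ h₄)⟩⟩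

end Surface

noncomputable def planeConic {K : Type*} [CommRing K] (M : Matrix (Fin 3) (Fin 3) K) :
    MvPolynomial (Fin 3) K :=
  ∑ i, ∑ j, C (M i j) * X i * X j

theorem transpose_eq_neg_of_planeConic_eq_zero {K : Type*} [CommRing K]
    {M : Matrix (Fin 3) (Fin 3) K} (h : planeConic M = 0) : M.transpose = -M := by
  have hB : ∀ w : Fin 3 → K, ∑ i, ∑ j, M i j * w i * w j = 0 := fun w => by
    simpa [planeConic] using congrArg (eval w) h
  have hdiag : ∀ i, M i i = 0 := fun i => by simpa [Pi.single_apply] using hB (Pi.single i 1)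
  ext i j
  have hpair := hB (Pi.single i 1 + Pi.single j 1)
  simp only [Pi.add_apply, Pi.single_apply, mul_add, mul_ite, mul_one, mul_zero,
    Finset.sum_add_distrib, Finset.sum_ite_eq', Finset.mem_univ, ↓reduceIte, hdiag, zero_add,
    add_zero] at hpair
  simp only [Matrix.transpose_apply, Matrix.neg_apply]
  linear_combination hpair

theorem planeConic_ne_zero {K : Type*} [Field K] [CharZero K] {M : Matrix (Fin 3) (Fin 3) K}
    (hM : M.det ≠ 0) : planeConic M ≠ 0 := by
  intro h
  apply hM
  have hskew := congrArg Matrix.det (transpose_eq_neg_of_planeConic_eq_zero h)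
  rw [Matrix.det_transpose, Matrix.det_neg, Fintype.card_fin] at hskew
  exact self_eq_neg.mp (by linear_combination hskew)

theorem qconic_eq_rename (Mq : Matrix (Fin 3) (Fin 3) ℂ) :
    qconic Mq = rename (Fin.castLE (by norm_num)) (planeConic Mq) := by
  simp [qconic, planeConic]

theorem qconic_isHomogeneous (Mq : Matrix (Fin 3) (Fin 3) ℂ) : (qconic Mq).IsHomogeneous 2 :=
  IsHomogeneous.sum _ _ _ fun _ _ => IsHomogeneous.sum _ _ _ fun _ _ =>
    ((isHomogeneous_C _ _).mul (isHomogeneous_X _ _)).mul (isHomogeneous_X _ _)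

theorem qconic_notMem_span_X3_X4 {Mq : Matrix (Fin 3) (Fin 3) ℂ} (hdet : Mq.det ≠ 0) :
    qconic Mq ∉ Ideal.span {X 3, X 4} := by
  have h35 : 3 ≤ 5 := by norm_num
  have hnot : ∀ i : Fin 5, 3 ≤ (i : ℕ) → i ∉ Set.range (Fin.castLE h35) := by
    rintro i hi ⟨j, rfl⟩
    exact absurd hi (by simp)
  have hle : Ideal.span {X 3, X 4} ≤
      RingHom.ker (killCompl (R := ℂ) (Fin.castLE_injective h35)) := by
    rw [Ideal.span_le, Set.insert_subset_iff, Set.singleton_subset_iff]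
    constructor <;>
      rw [SetLike.mem_coe, RingHom.mem_ker, killCompl, aeval_X, dif_neg (hnot _ (by decide))]
  intro h
  have hker := hle h
  rw [RingHom.mem_ker, qconic_eq_rename, killCompl_rename_app] at hker
  exact planeConic_ne_zero hdet hker

theorem mem_span_X3_X4_of_mul_qconic_mem {Mq : Matrix (Fin 3) (Fin 3) ℂ} (hdet : Mq.det ≠ 0)
    {c : R} (h : c * qconic Mq ∈ Ideal.span {X 3, X 4}) : c ∈ Ideal.span {X 3, X 4} := by
  have : (Ideal.span {(X 3 : R), X 4}).IsPrime := by
    simpa [Set.image_pair] using isPrime_span_X_image (R := ℂ) ({3, 4} : Set (Fin 5))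
  exact (Ideal.IsPrime.mul_mem_right_iff (qconic_notMem_span_X3_X4 hdet)).mp h

theorem mem_span_X3_of_mul_X4_mem {c : R} (h : c * X 4 ∈ Ideal.span {X 3}) :
    c ∈ Ideal.span {X 3} := by
  have : (Ideal.span {(X 3 : R)}).IsPrime := by
    simpa using isPrime_span_X_image (R := ℂ) ({3} : Set (Fin 5))
  refine (Ideal.IsPrime.mul_mem_right_iff ?_).mp h
  rw [Ideal.mem_span_singleton, X_dvd_X]
  decide

theorem coeff_single_lin (t : Fin 5 → ℂ) (i : Fin 5) :
    coeff (Finsupp.single i 1) (lin t) = t i := by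
  classical
  simp [lin, coeff_sum, coeff_X, Finsupp.single_left_inj]

theorem lin_eq_of_forall_lt_three {t : Fin 5 → ℂ} (ht : ∀ i : Fin 5, (i : ℕ) < 3 → t i = 0) :
    lin t = C (t 3) * X 3 + C (t 4) * X 4 := by
  simp [lin, Fin.sum_univ_five, ht 0, ht 1, ht 2]

theorem lin_mem_span_iff {q : R} (hq : q.IsHomogeneous 2) (t : Fin 5 → ℂ) :
    lin t ∈ Ideal.span {X 3, X 4, q} ↔ ∀ i : Fin 5, (i : ℕ) < 3 → t i = 0 := by
  refine ⟨fun h i hi => ?_, fun ht => ?_⟩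
  · rw [← coeff_single_lin t i]
    exact coeff_single_eq_zero_of_mem_span hq (by rintro rfl; exact absurd hi (by decide))
      (by rintro rfl; exact absurd hi (by decide)) h
  · rw [lin_eq_of_forall_lt_three ht]
    exact add_mem (Ideal.mul_mem_left _ _ (Ideal.subset_span (by simp)))
      (Ideal.mul_mem_left _ _ (Ideal.subset_span (by simp)))

theorem normal_section_of_conic
    (lam3 lam4 mu3 mu4 : Fin 5 → ℂ)
    (Mq : Matrix (Fin 3) (Fin 3) ℂ) (hsmooth : Mq.det ≠ 0) :
    letI Q0 : R := X 3 * lin lam3 + X 4 * lin lam4 + qconic Mq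
    letI Q' : R := X 3 * lin mu3 + X 4 * lin mu4
    letI IS : Ideal R := Ideal.span {Q0, Q'}
    letI A := R ⧸ IS
    letI mk : R →+* A := Ideal.Quotient.mk IS
    letI Jc : Ideal A := Ideal.span {mk (X 3), mk (X 4), mk (qconic Mq)}
    letI mkc : A →+* A ⧸ Jc := Ideal.Quotient.mk Jc
    letI isθ : (Jc →ₗ[A] A ⧸ Jc) → Prop := fun θ =>
      θ ⟨mk (X 3), Ideal.subset_span (Set.mem_insert _ _)⟩ = mkc (mk (lin mu4)) ∧
      θ ⟨mk (X 4), Ideal.subset_span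
          (Set.mem_insert_of_mem _ (Set.mem_insert _ _))⟩ = mkc (mk (-lin mu3)) ∧
      θ ⟨mk (qconic Mq), Ideal.subset_span
          (Set.mem_insert_of_mem _ (Set.mem_insert_of_mem _ rfl))⟩ =
        mkc (mk (lin mu3 * lin lam4 - lin mu4 * lin lam3))
    (∃ θ : Jc →ₗ[A] A ⧸ Jc, isθ θ) ∧
    ∀ θ : Jc →ₗ[A] A ⧸ Jc, isθ θ →
      (θ = 0 ↔ (∀ i : Fin 5, (i : ℕ) < 3 → mu3 i = 0) ∧
        (∀ i : Fin 5, (i : ℕ) < 3 → mu4 i = 0)) := by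
  have hq := qconic_isHomogeneous Mq
  refine ⟨exists_normalSection (mem_nonZeroDivisors_of_ne_zero (X_ne_zero 3))
    (fun _ => mem_span_X3_of_mul_X4_mem) (fun _ => mem_span_X3_X4_of_mul_qconic_mem hsmooth)
    _ _ _ _, fun θ ⟨h₁, h₂, h₃⟩ => ?_⟩
  rw [normalSection_eq_zero_iff _ _ _ _ θ h₁ h₂ h₃, lin_mem_span_iff hq, lin_mem_span_iff hq]

end Stmt15
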